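/- arXiv:1504.07494 — 6 statements merged into one kernel-verified Lean document; each statement's English description precedes it below -/
import Mathlib

section
/- Let r be a prime power and let R = ℤ/rℤ. Let (a,b) and (c,d) be two distinct points of R² that are neighbors, i.e. (a−c, b−d) ∉ B. Then the number of distinct lines of R² (distinct as subsets of R²) containing both (a,b) and (c,d) equals r / o, where o is the order of the element (a−c, b−d) in the additive group R². -/
/-!
Over a local ring every row of an invertible matrix has a unit entry. In `ZMod (p ^ k)`
divisibility is total, so after swapping the coordinates the difference `δ = x - y` of the two
points satisfies `δ₁ ∣ δ₂`. A line through `x` and `y` whose direction has a non-unit first entry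
would then force `δ = 0`, so every such line is `x + R (1, z)` with `δ₁ z = δ₂`, and distinct `z`
give distinct lines. The solutions `z` form a coset of the annihilator of `δ₁`, which has
`r / ord δ₁` elements, and `ord δ = lcm (ord δ₁) (ord δ₂) = ord δ₁`.
-/

/-- `B` is the set of pairs `(u,v)` occurring as a row of some invertible `2 × 2`
matrix with entries in `R`. -/
def Bset (R : Type*) [CommRing R] : Set (R × R) :=
  {uv | ∃ M : Matrix (Fin 2) (Fin 2) R, IsUnit M.det ∧ ∃ i : Fin 2, M i 0 = uv.1 ∧ M i 1 = uv.2}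

/-- A line in `R²` is a subset of the form `{(a + ℓu, b + ℓv) : ℓ ∈ R}` for some
`(a,b) ∈ R²` and `(u,v) ∈ B`. -/
def IsLine {R : Type*} [CommRing R] (L : Set (R × R)) : Prop :=
  ∃ a b : R, ∃ uv : R × R, uv ∈ Bset R ∧
    L = {p | ∃ ℓ : R, p = (a + ℓ * uv.1, b + ℓ * uv.2)}

open Set

section Lines

variable {R : Type*} [CommRing R]

theorem Prod.swap_mem_Bset {w : R × R} (hw : w ∈ Bset R) : w.swap ∈ Bset R := by
  obtain ⟨M, hM, i, h0, h1⟩ := hw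
  refine ⟨M.submatrix id (Equiv.swap 0 1), ?_, i, by simpa using h1, by simpa using h0⟩
  rw [Matrix.det_permute', Equiv.Perm.sign_swap (by decide)]
  simpa using hM.neg

theorem one_mk_mem_Bset (z : R) : ((1 : R), z) ∈ Bset R :=
  ⟨!![1, z; 0, 1], by simp [Matrix.det_fin_two_of], 0, rfl, rfl⟩

theorem Bset.isUnit_fst_or_isUnit_snd [IsLocalRing R] {w : R × R} (hw : w ∈ Bset R) :
    IsUnit w.1 ∨ IsUnit w.2 := by
  obtain ⟨M, hM, i, h0, h1⟩ := hw
  by_contra! h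
  simp only [← mem_nonunits_iff, ← IsLocalRing.mem_maximalIdeal, ← h0, ← h1] at h
  refine (IsLocalRing.mem_maximalIdeal _).mp ?_ hM
  rw [Matrix.det_fin_two]
  fin_cases i
  · exact Ideal.sub_mem _ (Ideal.mul_mem_right _ _ h.1) (Ideal.mul_mem_right _ _ h.2)
  · exact Ideal.sub_mem _ (Ideal.mul_mem_left _ _ h.2) (Ideal.mul_mem_left _ _ h.1)

def lineThrough (x w : R × R) : Set (R × R) :=
  range fun ℓ : R => x + ℓ • w

theorem self_mem_lineThrough (x w : R × R) : x ∈ lineThrough x w :=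
  ⟨0, by simp⟩

theorem lineThrough_eq_of_mem {x y w : R × R} (hy : y ∈ lineThrough x w) :
    lineThrough y w = lineThrough x w := by
  obtain ⟨m, rfl⟩ := hy
  ext p
  constructor
  · rintro ⟨ℓ, rfl⟩
    exact ⟨m + ℓ, by simp only [add_smul, add_assoc]⟩
  · rintro ⟨ℓ, rfl⟩
    exact ⟨ℓ - m, by simp only [sub_smul, add_add_sub_cancel]⟩

theorem lineThrough_unit_smul (x w : R × R) {u : R} (hu : IsUnit u) :
    lineThrough x (u • w) = lineThrough x w := by
  ext p
  constructor
  · rintro ⟨ℓ, rfl⟩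
    exact ⟨ℓ * u, by simp only [mul_smul]⟩
  · rintro ⟨ℓ, rfl⟩
    refine ⟨ℓ * hu.unit⁻¹, ?_⟩
    change x + (ℓ * ↑hu.unit⁻¹) • u • w = x + ℓ • w
    rw [smul_smul, mul_assoc, Units.inv_mul_of_eq hu.unit_spec, mul_one]

theorem mem_lineThrough_one_mk_iff {x y : R × R} {z : R} :
    y ∈ lineThrough x (1, z) ↔ (y - x).1 * z = (y - x).2 := by
  constructor
  · rintro ⟨ℓ, rfl⟩
    simp
  · intro h
    refine ⟨(y - x).1, Prod.ext ?_ ?_⟩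
    · simp
    · simp only [Prod.snd_add, Prod.smul_snd, smul_eq_mul, h, Prod.snd_sub, add_sub_cancel]

theorem lineThrough_one_mk_injective (x : R × R) :
    Function.Injective fun z : R => lineThrough x (1, z) := by
  intro z z' (h : lineThrough x (1, z) = lineThrough x (1, z'))
  have hz : x + (1, z) ∈ lineThrough x (1, z') := h ▸ ⟨1, by simp⟩
  simpa [eq_comm] using mem_lineThrough_one_mk_iff.mp hz

theorem image_swap_lineThrough (x w : R × R) :
    Prod.swap '' lineThrough x w = lineThrough x.swap w.swap := by
  rw [lineThrough, ← range_comp]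
  rfl

theorem isLine_iff {L : Set (R × R)} : IsLine L ↔ ∃ x, ∃ w ∈ Bset R, L = lineThrough x w := by
  constructor
  · rintro ⟨a, b, w, hw, rfl⟩
    exact ⟨(a, b), w, hw, by ext; simp [lineThrough, Prod.ext_iff, eq_comm]⟩
  · rintro ⟨⟨a, b⟩, w, hw, rfl⟩
    exact ⟨a, b, w, hw, by ext; simp [lineThrough, Prod.ext_iff, eq_comm]⟩

theorem IsLine.image_swap {L : Set (R × R)} (hL : IsLine L) : IsLine (Prod.swap '' L) := by
  obtain ⟨x, w, hw, rfl⟩ := isLine_iff.mp hL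
  exact isLine_iff.mpr ⟨x.swap, w.swap, Prod.swap_mem_Bset hw, image_swap_lineThrough x w⟩

def linesThrough (x y : R × R) : Set (Set (R × R)) :=
  {L | IsLine L ∧ x ∈ L ∧ y ∈ L}

theorem linesThrough_swap (x y : R × R) :
    linesThrough x.swap y.swap = image Prod.swap '' linesThrough x y := by
  ext L
  constructor
  · rintro ⟨hL, hx, hy⟩
    exact ⟨Prod.swap '' L, ⟨hL.image_swap, ⟨_, hx, x.swap_swap⟩, ⟨_, hy, y.swap_swap⟩⟩,
      by simp [image_image]⟩
  · rintro ⟨L, ⟨hL, hx, hy⟩, rfl⟩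
    exact ⟨hL.image_swap, mem_image_of_mem _ hx, mem_image_of_mem _ hy⟩

theorem ncard_linesThrough_swap (x y : R × R) :
    (linesThrough x.swap y.swap).ncard = (linesThrough x y).ncard := by
  rw [linesThrough_swap, ncard_image_of_injective _ (image_injective.mpr Prod.swap_injective)]

end Lines

section LocalRing

variable {R : Type*} [CommRing R] [IsLocalRing R]

theorem Bset.isUnit_fst_of_smul_ne_zero_of_dvd {w : R × R} (hw : w ∈ Bset R) {t : R}
    (htw : t • w ≠ 0) (hdvd : (t • w).1 ∣ (t • w).2) : IsUnit w.1 := by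
  rcases Bset.isUnit_fst_or_isUnit_snd hw with hw₁ | hw₂
  · exact hw₁
  by_contra hw₁
  obtain ⟨q, hq⟩ := hdvd
  have hunit : IsUnit (w.2 - w.1 * q) := by
    refine (IsLocalRing.isUnit_or_isUnit_of_isUnit_add (b := w.1 * q) ?_).resolve_right ?_
    · rwa [sub_add_cancel]
    · exact fun h => hw₁ (isUnit_of_mul_isUnit_left h)
  have ht : t = 0 := by
    refine hunit.mul_left_eq_zero.mp ?_
    simp only [Prod.smul_fst, Prod.smul_snd, smul_eq_mul] at hq
    linear_combination hq
  exact htw (by rw [ht, zero_smul])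

theorem linesThrough_eq_image {x y : R × R} (hxy : x ≠ y) (hdvd : (x - y).1 ∣ (x - y).2) :
    linesThrough x y = (fun z => lineThrough x (1, z)) '' {z | (x - y).1 * z = (x - y).2} := by
  ext L
  constructor
  · rintro ⟨hL, hx, hy⟩
    obtain ⟨x₀, w, hw, rfl⟩ := isLine_iff.mp hL
    rw [← lineThrough_eq_of_mem hx] at hy ⊢
    obtain ⟨ℓ, rfl⟩ := hy
    have hδ : x - (x + ℓ • w) = (-ℓ) • w := by rw [neg_smul, sub_add_cancel_left]
    beta_reduce at hxy hdvd ⊢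
    rw [hδ] at hdvd ⊢
    have hu := Bset.isUnit_fst_of_smul_ne_zero_of_dvd hw (hδ ▸ sub_ne_zero.mpr hxy) hdvd
    refine ⟨hu.unit⁻¹ * w.2, ?_, ?_⟩
    · simp only [Prod.smul_fst, Prod.smul_snd, smul_eq_mul, mem_ofPred_eq]
      linear_combination (-ℓ * w.2) * hu.val_inv_mul
    · rw [← lineThrough_unit_smul x w hu.unit⁻¹.isUnit]
      refine congrArg (lineThrough x) (Prod.ext ?_ rfl)
      exact hu.val_inv_mul.symm
  · rintro ⟨z, hz, rfl⟩
    refine ⟨isLine_iff.mpr ⟨x, _, one_mk_mem_Bset z, rfl⟩, self_mem_lineThrough x (1, z), ?_⟩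
    rw [mem_lineThrough_one_mk_iff, ← neg_sub x y, Prod.fst_neg, Prod.snd_neg, neg_mul, hz]

theorem ncard_linesThrough_of_dvd {x y : R × R} (hxy : x ≠ y) (hdvd : (x - y).1 ∣ (x - y).2) :
    (linesThrough x y).ncard = {z | (x - y).1 * z = (x - y).2}.ncard := by
  rw [linesThrough_eq_image hxy hdvd, ncard_image_of_injective _ (lineThrough_one_mk_injective x)]

end LocalRing

theorem addOrderOf_dvd_of_dvd {R : Type*} [NonUnitalSemiring R] {x y : R} (h : x ∣ y) :
    addOrderOf y ∣ addOrderOf x := by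
  obtain ⟨q, rfl⟩ := h
  exact addOrderOf_dvd_of_nsmul_eq_zero <| by
    rw [← smul_mul_assoc, addOrderOf_nsmul_eq_zero, zero_mul]

namespace ZMod

section PrimePow

variable {p k : ℕ}

theorem isUnit_iff_not_natCast_dvd (hp : p.Prime) (hk : k ≠ 0) {x : ZMod (p ^ k)} :
    IsUnit x ↔ ¬(p : ZMod (p ^ k)) ∣ x := by
  have : NeZero (p ^ k) := ⟨pow_ne_zero k hp.ne_zero⟩
  have hk₀ : 0 < k := Nat.pos_of_ne_zero hk
  refine ⟨fun hx hpx => prime_natCast_not_isUnit_pow hp hk₀ (isUnit_of_dvd_unit hpx hx),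
    fun h => ?_⟩
  rw [← natCast_zmod_val x, isUnit_natCast_iff_not_dvd_pow hp hk₀]
  exact fun hpx => h (natCast_zmod_val x ▸ Nat.cast_dvd_cast hpx)

theorem isLocalRing_of_prime_pow (hp : p.Prime) (hk : k ≠ 0) : IsLocalRing (ZMod (p ^ k)) :=
  have : Nontrivial (ZMod (p ^ k)) := nontrivial_iff.mpr (Nat.one_lt_pow hk hp.one_lt).ne'
  .of_nonunits_add fun x y hx hy => by
    simp only [mem_nonunits_iff, isUnit_iff_not_natCast_dvd hp hk, not_not] at hx hy ⊢
    exact dvd_add hx hy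

theorem associated_pow_of_ne_zero (hp : p.Prime) {x : ZMod (p ^ k)} (hx : x ≠ 0) :
    ∃ i, Associated ((p : ZMod (p ^ k)) ^ i) x := by
  have hk : 0 < k := Nat.pos_of_ne_zero fun hk => by
    subst hk
    exact hx (Subsingleton.elim (α := ZMod 1) x 0)
  have : NeZero (p ^ k) := ⟨pow_ne_zero k hp.ne_zero⟩
  obtain ⟨i, m, hm, hxm⟩ :=
    Nat.exists_eq_pow_mul_and_not_dvd ((val_ne_zero x).mpr hx) p hp.ne_one
  refine ⟨i, ?_⟩
  rw [← natCast_zmod_val x, hxm, Nat.cast_mul, Nat.cast_pow]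
  exact associated_mul_unit_right _ _ ((isUnit_natCast_iff_not_dvd_pow hp hk).mpr hm)

theorem dvd_total_of_prime_pow (hp : p.Prime) (x y : ZMod (p ^ k)) : x ∣ y ∨ y ∣ x := by
  rcases eq_or_ne x 0 with rfl | hx
  · exact .inr (dvd_zero y)
  rcases eq_or_ne y 0 with rfl | hy
  · exact .inl (dvd_zero x)
  obtain ⟨i, hi⟩ := associated_pow_of_ne_zero hp hx
  obtain ⟨j, hj⟩ := associated_pow_of_ne_zero hp hy
  rcases le_total i j with hij | hji
  · exact .inl (hi.symm.dvd.trans ((pow_dvd_pow _ hij).trans hj.dvd))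
  · exact .inr (hj.symm.dvd.trans ((pow_dvd_pow _ hji).trans hi.dvd))

end PrimePow

variable {n : ℕ}

theorem range_mulLeft (x : ZMod n) :
    (AddMonoidHom.mulLeft x).range = AddSubgroup.zmultiples x := by
  ext y
  simp only [AddMonoidHom.mem_range, AddMonoidHom.coe_mulLeft, AddSubgroup.mem_zmultiples_iff]
  constructor
  · rintro ⟨z, rfl⟩
    obtain ⟨m, rfl⟩ := intCast_surjective z
    exact ⟨m, by rw [zsmul_eq_mul, mul_comm]⟩
  · rintro ⟨m, rfl⟩
    exact ⟨m, by rw [zsmul_eq_mul, mul_comm]⟩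

theorem ncard_mul_eq [NeZero n] {x y : ZMod n} (hxy : x ∣ y) :
    {z | x * z = y}.ncard = n / addOrderOf x := by
  obtain ⟨q, rfl⟩ := hxy
  have hfiber : {z | x * z = x * q} = (q + ·) '' (AddMonoidHom.mulLeft x).ker := by
    ext z
    refine ⟨fun hz => ⟨z - q, by simpa [mul_sub, sub_eq_zero] using hz, add_sub_cancel q z⟩, ?_⟩
    rintro ⟨m, hm, rfl⟩
    simp_all [mul_add]
  have hcard : Nat.card (AddMonoidHom.mulLeft x).ker * addOrderOf x = n := by
    rw [← Nat.card_zmultiples, ← range_mulLeft, ← AddSubgroup.index_ker,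
      AddSubgroup.card_mul_index, Nat.card_zmod]
  rw [hfiber, ncard_image_of_injective _ (add_right_injective q), ← Nat.card_coe_set_eq,
    SetLike.coe_sort_coe]
  exact (Nat.div_eq_of_eq_mul_left (addOrderOf_pos x) hcard.symm).symm

end ZMod

theorem lines_through_neighbors_general (r : ℕ) (hr : IsPrimePow r)
    (a b c d : ZMod r)
    (hne : (a, b) ≠ (c, d)) :
    Set.ncard {L : Set (ZMod r × ZMod r) | IsLine L ∧ (a, b) ∈ L ∧ (c, d) ∈ L} =
      r / addOrderOf ((a - c, b - d) : ZMod r × ZMod r) := by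
  obtain ⟨p, k, hp, hk, rfl⟩ := hr
  replace hp : p.Prime := Nat.prime_iff.mpr hp
  have : IsLocalRing (ZMod (p ^ k)) := ZMod.isLocalRing_of_prime_pow hp hk.ne'
  have : NeZero (p ^ k) := ⟨pow_ne_zero k hp.ne_zero⟩
  change (linesThrough (a, b) (c, d)).ncard = _
  rw [Prod.addOrderOf_mk]
  rcases ZMod.dvd_total_of_prime_pow hp (a - c) (b - d) with h | h
  · rw [ncard_linesThrough_of_dvd hne h, Prod.mk_sub_mk, ZMod.ncard_mul_eq h,
      Nat.lcm_eq_left (addOrderOf_dvd_of_dvd h)]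
  · rw [← ncard_linesThrough_swap, ncard_linesThrough_of_dvd (Prod.swap_injective.ne hne) h,
      Prod.swap_prod_mk, Prod.swap_prod_mk, Prod.mk_sub_mk, ZMod.ncard_mul_eq h,
      Nat.lcm_eq_right (addOrderOf_dvd_of_dvd h)]

/-- If `r` is a prime power and `(a,b)`, `(c,d)` are distinct neighboring points of
`(ℤ/rℤ)²`, then the number of distinct lines containing both points is
`r / o((a-c, b-d))`, where `o` denotes the additive order. -/
theorem lines_through_neighbors (r : ℕ) (hr : IsPrimePow r)
    (a b c d : ZMod r)
    (hne : (a, b) ≠ (c, d))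
    (hnbr : (a - c, b - d) ∉ Bset (ZMod r)) :
    Set.ncard {L : Set (ZMod r × ZMod r) | IsLine L ∧ (a, b) ∈ L ∧ (c, d) ∈ L} =
      r / addOrderOf ((a - c, b - d) : ZMod r × ZMod r) :=
  lines_through_neighbors_general r hr a b c d hne
end

section
/- Let q be a prime power and let S ⊆ {0, 1, …, q−2}² be a set of exponent vectors. Suppose S contains two elements e = (e₁,e₂) and e' = (e₁',e₂') and there are an integer N ≥ 1 dividing q − 1 and a pair (u,v) ∈ B over ℤ/(q−1)ℤ such that (e₁ − e₁', e₂ − e₂') ≡ N·(u,v) (mod q−1). Then the minimum distance of the generalized toric code C_S(𝔽_q) satisfies d(C_S(𝔽_q)) ≤ (q−1)² − N(q−1); concretely, there is a nonzero 𝔽_q-linear combination of the monomials x^{s₁}y^{s₂}, (s₁,s₂) ∈ S, that vanishes at at least N(q−1) points of (𝔽_q^×)². -/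
/-!
Take the binomial codeword `x^{e₁} y^{e₂} - x^{e₁'} y^{e₂'}`. Through a discrete logarithm
`ZMod (q - 1) ≃ 𝔽_q^×` it vanishes at `(g^a, g^b)` exactly when
`(e₁ - e₁') a + (e₂ - e₂') b = N (u a + v b) = 0`. Completing `(u, v)` to an invertible matrix
turns `u a + v b` into a coordinate, so the zeros number `#{t | N t = 0} · (q - 1) ≥ N (q - 1)`.
The binomial is nonzero since distinct exponents below `q - 1` give distinct monomials on the torus.
-/

open Matrix in
theorem Bset.card_linearForm {R : Type*} [CommRing R] [Finite R] {u v : R}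
    (huv : (u, v) ∈ Bset R) (P : R → Prop) :
    Nat.card {x : R × R // P (u * x.1 + v * x.2)} = Nat.card {t // P t} * Nat.card R := by
  obtain ⟨M, hM, i, hu, hv⟩ := huv
  have hbij : Function.Bijective M.mulVec := Finite.surjective_iff_bijective.1 <|
    Matrix.mulVec_surjective_iff_isUnit.2 <| (Matrix.isUnit_iff_isUnit_det M).2 hM
  have hrow : ∀ x : Fin 2 → R, (M *ᵥ x) i = u * x 0 + v * x 1 := fun x => by
    simp [Matrix.mulVec, dotProduct, Fin.sum_univ_two, hu, hv]
  calc Nat.card {x : R × R // P (u * x.1 + v * x.2)}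
      = Nat.card {y : Fin 2 → R // P (y i)} := Nat.card_congr <|
        ((finTwoArrowEquiv R).symm.trans (Equiv.ofBijective _ hbij)).subtypeEquiv
          fun x => by simp only [Equiv.trans_apply, Equiv.ofBijective_apply, hrow]; rfl
    _ = Nat.card ({t // P t} × ({j // j ≠ i} → R)) := Nat.card_congr <|
        ((Equiv.funSplitAt i R).subtypeEquiv fun _ => Iff.rfl).trans
          Equiv.prodSubtypeFstEquivSubtypeProd
    _ = Nat.card {t // P t} * Nat.card R := by
        rw [Nat.card_prod, Nat.card_fun]
        fin_cases i <;> simp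

theorem ZMod.le_card_mul_eq_zero {n N : ℕ} [NeZero n] (hN : N ∣ n) :
    N ≤ Nat.card {t : ZMod n // (N : ZMod n) * t = 0} := by
  have hn : n ≠ 0 := NeZero.ne n
  calc N = addOrderOf ((n / N : ℕ) : ZMod n) := by
        rw [ZMod.addOrderOf_coe _ hn, Nat.gcd_eq_right (Nat.div_dvd_of_dvd hN),
          Nat.div_div_self hN hn]
    _ = Nat.card (AddSubgroup.zmultiples ((n / N : ℕ) : ZMod n)) := (Nat.card_zmultiples _).symm
    _ ≤ Nat.card {t : ZMod n // (N : ZMod n) * t = 0} := by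
        refine Nat.card_mono (Set.toFinite _) ?_
        rintro _ ⟨k, rfl⟩
        change (N : ZMod n) * (k • _) = 0
        rw [mul_smul_comm, ← Nat.cast_mul, Nat.mul_div_cancel' hN, ZMod.natCast_self, zsmul_zero]

section Torus

variable {G : Type*} [CommGroup G]

theorem card_pow_mul_pow_eq_pow_mul_pow {n : ℕ} (ψ : Multiplicative (ZMod n) ≃* G)
    (e e' : ℕ × ℕ) :
    Nat.card {p : G × G // p.1 ^ e.1 * p.2 ^ e.2 = p.1 ^ e'.1 * p.2 ^ e'.2} =
      Nat.card {x : ZMod n × ZMod n //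
        ((e.1 : ZMod n) - e'.1) * x.1 + ((e.2 : ZMod n) - e'.2) * x.2 = 0} := by
  let φ : ZMod n ≃ G := Multiplicative.ofAdd.trans ψ.toEquiv
  have hφ : ∀ (a : ZMod n) (k : ℕ), φ a ^ k = ψ (Multiplicative.ofAdd (k * a)) := fun a k => by
    rw [← nsmul_eq_mul, ofAdd_nsmul, map_pow]; rfl
  refine (Nat.card_congr <| (φ.prodCongr φ).subtypeEquiv fun x => ?_).symm
  simp only [Equiv.prodCongr_apply, Prod.map_fst, Prod.map_snd, hφ, ← map_mul,
    ψ.injective.eq_iff, ← ofAdd_add, Multiplicative.ofAdd.injective.eq_iff]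
  constructor <;> intro h <;> linear_combination h

theorem exists_pow_mul_pow_ne [Finite G] [IsCyclic G] {e e' : ℕ × ℕ} (hne : e ≠ e')
    (he : e.1 < Nat.card G ∧ e.2 < Nat.card G) (he' : e'.1 < Nat.card G ∧ e'.2 < Nat.card G) :
    ∃ p : G × G, p.1 ^ e.1 * p.2 ^ e.2 ≠ p.1 ^ e'.1 * p.2 ^ e'.2 := by
  obtain ⟨g, hg⟩ := IsCyclic.exists_generator (α := G)
  have hord : orderOf g = Nat.card G := orderOf_eq_card_of_forall_mem_zpowers hg
  have hpow : ∀ {a b : ℕ}, a < Nat.card G → b < Nat.card G → g ^ a = g ^ b → a = b :=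
    fun ha hb h => by rwa [pow_inj_mod, hord, Nat.mod_eq_of_lt ha, Nat.mod_eq_of_lt hb] at h
  by_contra! h
  have h1 := h (g, 1)
  have h2 := h (1, g)
  simp only [one_pow, mul_one, one_mul] at h1 h2
  exact hne (Prod.ext (hpow he.1 he'.1 h1) (hpow he.2 he'.2 h2))

theorem le_card_pow_mul_pow_eq [Finite G] [IsCyclic G] {n N : ℕ} (hn : Nat.card G = n)
    (hN : N ∣ n) {u v : ZMod n} (huv : (u, v) ∈ Bset (ZMod n)) {e e' : ℕ × ℕ}
    (h₁ : (e.1 : ZMod n) - e'.1 = N * u) (h₂ : (e.2 : ZMod n) - e'.2 = N * v) :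
    N * n ≤ Nat.card {p : G × G // p.1 ^ e.1 * p.2 ^ e.2 = p.1 ^ e'.1 * p.2 ^ e'.2} := by
  subst hn
  have : NeZero (Nat.card G) := ⟨Nat.card_pos.ne'⟩
  rw [card_pow_mul_pow_eq_pow_mul_pow (zmodCyclicMulEquiv ‹_›), h₁, h₂]
  simp_rw [mul_assoc, ← mul_add]
  rw [Bset.card_linearForm huv (fun t => (N : ZMod (Nat.card G)) * t = 0), Nat.card_zmod]
  exact Nat.mul_le_mul_right _ (ZMod.le_card_mul_eq_zero hN)

end Torus

theorem Finset.sum_single_sub_single_mul {ι R : Type*} [DecidableEq ι] [CommRing R]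
    {S : Finset ι} {e e' : ι} (he : e ∈ S) (he' : e' ∈ S) (f : ι → R) :
    ∑ s ∈ S, (Pi.single e 1 - Pi.single e' 1 : ι → R) s * f s = f e - f e' := by
  simp [sub_mul, Finset.sum_sub_distrib, Pi.single_apply, he, he']

theorem toric_code_min_dist_le_general (q N : ℕ)
    (hNdvd : N ∣ q - 1)
    (F : Type) [Field F] [Fintype F] (hF : Fintype.card F = q)
    (S : Finset (ℕ × ℕ)) (hS : ∀ s ∈ S, s.1 ≤ q - 2 ∧ s.2 ≤ q - 2)
    (e e' : ℕ × ℕ) (he : e ∈ S) (he' : e' ∈ S) (hee' : e ≠ e')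
    (u v : ZMod (q - 1)) (huv : ((u, v) : ZMod (q - 1) × ZMod (q - 1)) ∈ Bset (ZMod (q - 1)))
    (hdiff1 : (e.1 : ZMod (q - 1)) - (e'.1 : ZMod (q - 1)) = (N : ZMod (q - 1)) * u)
    (hdiff2 : (e.2 : ZMod (q - 1)) - (e'.2 : ZMod (q - 1)) = (N : ZMod (q - 1)) * v) :
    ∃ w : Fˣ × Fˣ → F,
      (∃ c : ℕ × ℕ → F,
        ∀ p : Fˣ × Fˣ, w p = ∑ s ∈ S, c s * (p.1 : F) ^ s.1 * (p.2 : F) ^ s.2) ∧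
      w ≠ 0 ∧
      N * (q - 1) ≤ Nat.card {p : Fˣ × Fˣ // w p = 0} ∧
      Nat.card {p : Fˣ × Fˣ // w p ≠ 0} ≤ (q - 1) ^ 2 - N * (q - 1) := by
  classical
  have hcard : Nat.card Fˣ = q - 1 := by rw [Nat.card_eq_fintype_card, Fintype.card_units, hF]
  have hexp : ∀ s ∈ S, s.1 < Nat.card Fˣ ∧ s.2 < Nat.card Fˣ := fun s hs => by
    have := Nat.card_pos (α := Fˣ); have := hS s hs; omega
  let c : ℕ × ℕ → F := Pi.single e 1 - Pi.single e' 1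
  let w : Fˣ × Fˣ → F := fun p => ∑ s ∈ S, c s * (p.1 : F) ^ s.1 * (p.2 : F) ^ s.2
  have hw : ∀ p, w p = 0 ↔ p.1 ^ e.1 * p.2 ^ e.2 = p.1 ^ e'.1 * p.2 ^ e'.2 := fun p => by
    simp only [w, c, mul_assoc]
    rw [Finset.sum_single_sub_single_mul he he', sub_eq_zero, ← Units.val_inj]
    push_cast; rfl
  have hzero : N * (q - 1) ≤ Nat.card {p // w p = 0} := by
    rw [Nat.card_congr (Equiv.subtypeEquivRight hw)]
    exact le_card_pow_mul_pow_eq hcard hNdvd huv hdiff1 hdiff2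
  refine ⟨w, ⟨c, fun p => rfl⟩, fun hw0 => ?_, hzero, ?_⟩
  · obtain ⟨p, hp⟩ := exists_pow_mul_pow_ne hee' (hexp e he) (hexp e' he')
    exact hp ((hw p).1 (congrFun hw0 p))
  · have htotal : Nat.card {p // w p = 0} + Nat.card {p // w p ≠ 0} = (q - 1) * (q - 1) := by
      rw [← Nat.card_sum, Nat.card_congr (Equiv.sumCompl _), Nat.card_prod, hcard]
    rw [sq, ← htotal]
    omega

/-- Let `q` be a prime power, `F` a field with `q` elements, and
`S ⊆ {0,…,q-2}²` a set of exponent vectors containing two elements `e ≠ e'` whose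
difference is congruent mod `q - 1` to `N·(u,v)` for some divisor `N ≥ 1` of `q - 1`
and some `(u,v) ∈ B` over `ℤ/(q-1)ℤ`.  Then the generalized toric code `C_S(F)` has a
nonzero codeword vanishing at at least `N(q-1)` points of the torus; in particular its
minimum distance is at most `(q-1)² - N(q-1)`. -/
theorem toric_code_min_dist_le (q N : ℕ) (hq : IsPrimePow q)
    (hN : 1 ≤ N) (hNdvd : N ∣ q - 1)
    (F : Type) [Field F] [Fintype F] (hF : Fintype.card F = q)
    (S : Finset (ℕ × ℕ)) (hS : ∀ s ∈ S, s.1 ≤ q - 2 ∧ s.2 ≤ q - 2)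
    (e e' : ℕ × ℕ) (he : e ∈ S) (he' : e' ∈ S) (hee' : e ≠ e')
    (u v : ZMod (q - 1)) (huv : ((u, v) : ZMod (q - 1) × ZMod (q - 1)) ∈ Bset (ZMod (q - 1)))
    (hdiff1 : (e.1 : ZMod (q - 1)) - (e'.1 : ZMod (q - 1)) = (N : ZMod (q - 1)) * u)
    (hdiff2 : (e.2 : ZMod (q - 1)) - (e'.2 : ZMod (q - 1)) = (N : ZMod (q - 1)) * v) :
    ∃ w : Fˣ × Fˣ → F,
      (∃ c : ℕ × ℕ → F,
        ∀ p : Fˣ × Fˣ, w p = ∑ s ∈ S, c s * (p.1 : F) ^ s.1 * (p.2 : F) ^ s.2) ∧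
      w ≠ 0 ∧
      N * (q - 1) ≤ Nat.card {p : Fˣ × Fˣ // w p = 0} ∧
      Nat.card {p : Fˣ × Fˣ // w p ≠ 0} ≤ (q - 1) ^ 2 - N * (q - 1) :=
  toric_code_min_dist_le_general q N hNdvd F hF S hS e e' he he' hee' u v huv hdiff1 hdiff2
end

section
/- Let q be a prime power and let S ⊆ {0, 1, …, q−2}² contain the four points (0,0), (a,b), (c,d), (a+c, b+d), where the sums are taken modulo q−1. Suppose (a,b) ≡ N₁·(a',b') and (c,d) ≡ N₂·(c',d') (mod q−1) with N₁, N₂ positive divisors of q−1 and (a',b'), (c',d') ∈ B over ℤ/(q−1)ℤ, and suppose (a',b') and (c',d') generate the additive group (ℤ/(q−1)ℤ)². Then d(C_S(𝔽_q)) ≤ (q−1)² − (N₁+N₂)(q−1) + N₁N₂. -/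
section LinearAlgebra

variable {R : Type*} [CommRing R] {a b c d : R}

theorem isUnit_det_of_closure_pair_eq_top
    (h : AddSubgroup.closure ({(a, b), (c, d)} : Set (R × R)) = ⊤) : IsUnit (a * d - b * c) := by
  obtain ⟨m, k, hmk⟩ := AddSubgroup.mem_closure_pair.mp (h ▸ AddSubgroup.mem_top (1, 0))
  obtain ⟨m', k', hmk'⟩ := AddSubgroup.mem_closure_pair.mp (h ▸ AddSubgroup.mem_top (0, 1))
  simp only [Prod.ext_iff, Prod.fst_add, Prod.snd_add, Prod.smul_mk, zsmul_eq_mul] at hmk hmk'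
  -- `[[m, k], [m', k']]` is a left inverse of `[[a, b], [c, d]]`, so the determinants multiply to 1
  refine isUnit_iff_exists_inv'.mpr ⟨m * k' - k * m', ?_⟩
  linear_combination (↑m' * b + ↑k' * d) * hmk.1 - (↑m' * a + ↑k' * c) * hmk.2 + hmk'.2

noncomputable def prodEquivOfIsUnitDet (h : IsUnit (a * d - b * c)) : R × R ≃ R × R where
  toFun p := (a * p.1 + b * p.2, c * p.1 + d * p.2)
  invFun p := (↑h.unit⁻¹ * (d * p.1 - b * p.2), ↑h.unit⁻¹ * (a * p.2 - c * p.1))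
  left_inv p := by
    ext
    · linear_combination p.1 * h.val_inv_mul
    · linear_combination p.2 * h.val_inv_mul
  right_inv p := by
    ext
    · linear_combination p.1 * h.val_inv_mul
    · linear_combination p.2 * h.val_inv_mul

@[simp]
theorem prodEquivOfIsUnitDet_apply (h : IsUnit (a * d - b * c)) (p : R × R) :
    prodEquivOfIsUnitDet h p = (a * p.1 + b * p.2, c * p.1 + d * p.2) :=
  rfl

end LinearAlgebra

namespace ZMod

theorem natCast_ne_zero_of_natCast_pair_eq_mul {n N a b : ℕ} {a' b' : ZMod n} (ha : a < n)
    (hb : b < n) (hab : ((0, 0) : ℕ × ℕ) ≠ (a, b)) (ha' : (a : ZMod n) = N * a')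
    (hb' : (b : ZMod n) = N * b') : (N : ZMod n) ≠ 0 := by
  intro hN
  rw [hN, zero_mul, natCast_eq_zero_iff] at ha' hb'
  rw [Nat.eq_zero_of_dvd_of_lt ha' ha, Nat.eq_zero_of_dvd_of_lt hb' hb] at hab
  exact hab rfl

theorem le_natCard_mul_eq_zero {n N : ℕ} [NeZero n] (hN : N ∣ n) :
    N ≤ Nat.card {s : ZMod n // (N : ZMod n) * s = 0} := by
  obtain ⟨m, rfl⟩ := hN
  have hm : m ≠ 0 := right_ne_zero_of_mul (NeZero.ne (N * m))
  have hsub : (AddSubgroup.zmultiples (m : ZMod (N * m)) : Set (ZMod (N * m))) ⊆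
      {s | (N : ZMod (N * m)) * s = 0} := by
    rintro _ ⟨k, rfl⟩
    simp [mul_left_comm (N : ZMod (N * m)), ← Nat.cast_mul]
  calc N = addOrderOf (m : ZMod (N * m)) := by
        rw [addOrderOf_coe _ (NeZero.ne _), Nat.gcd_mul_left_left, Nat.mul_div_cancel _ hm.bot_lt]
    _ = Nat.card (AddSubgroup.zmultiples (m : ZMod (N * m))) := (Nat.card_zmultiples _).symm
    _ ≤ _ := Nat.card_mono (Set.toFinite _) hsub

theorem natCard_mul_ne_zero_le {n N : ℕ} [NeZero n] (hN : N ∣ n) :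
    Nat.card {s : ZMod n // (N : ZMod n) * s ≠ 0} ≤ n - N := by
  classical
  have := le_natCard_mul_eq_zero hN
  rw [Nat.card_eq_fintype_card, Fintype.card_subtype_compl, ZMod.card, ← Nat.card_eq_fintype_card]
  omega

theorem natCard_mul_ne_zero_and_mul_ne_zero_le {n N₁ N₂ : ℕ} [NeZero n] (hN₁ : N₁ ∣ n)
    (hN₂ : N₂ ∣ n) :
    Nat.card {st : ZMod n × ZMod n // (N₁ : ZMod n) * st.1 ≠ 0 ∧ (N₂ : ZMod n) * st.2 ≠ 0} ≤
      (n - N₁) * (n - N₂) := by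
  rw [Nat.card_congr (Equiv.subtypeProdEquivProd (p := fun s : ZMod n => (N₁ : ZMod n) * s ≠ 0)
    (q := fun t : ZMod n => (N₂ : ZMod n) * t ≠ 0)), Nat.card_prod]
  exact Nat.mul_le_mul (natCard_mul_ne_zero_le hN₁) (natCard_mul_ne_zero_le hN₂)

end ZMod

section Torus

variable {R : Type*} [CommRing R]

def torusMonomial (s : ℕ × ℕ) (p : Rˣ × Rˣ) : R := (p.1 : R) ^ s.1 * (p.2 : R) ^ s.2

theorem torusMonomial_zero : (torusMonomial 0 : Rˣ × Rˣ → R) = 1 := by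
  funext p; simp [torusMonomial]

theorem torusMonomial_add (s t : ℕ × ℕ) :
    (torusMonomial (s + t) : Rˣ × Rˣ → R) = torusMonomial s * torusMonomial t := by
  funext p; simp only [torusMonomial, Prod.fst_add, Prod.snd_add, Pi.mul_apply]; ring

theorem torusMonomial_mod_natCard_units (i j : ℕ) :
    (torusMonomial (i % Nat.card Rˣ, j % Nat.card Rˣ) : Rˣ × Rˣ → R) = torusMonomial (i, j) := by
  funext p; simp only [torusMonomial, ← Units.val_pow_eq_pow_val, pow_mod_natCard]

theorem exists_coeffs_of_mem_span_torusMonomial {S : Finset (ℕ × ℕ)} {w : Rˣ × Rˣ → R}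
    (hw : w ∈ Submodule.span R (torusMonomial '' S)) :
    ∃ co : ℕ × ℕ → R, ∀ p, w p = ∑ s ∈ S, co s * (p.1 : R) ^ s.1 * (p.2 : R) ^ s.2 := by
  obtain ⟨l, hl, rfl⟩ := (Finsupp.mem_span_image_iff_linearCombination R).mp hw
  refine ⟨l, fun p => ?_⟩
  rw [Finsupp.linearCombination_apply, Finsupp.sum_of_support_subset l hl _ (by simp)]
  simp [torusMonomial, mul_assoc]

variable {n : ℕ} (ℓ : Rˣ ≃* Multiplicative (ZMod n))

def torusLog : Rˣ × Rˣ ≃ ZMod n × ZMod n :=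
  (ℓ.toEquiv.trans Multiplicative.toAdd).prodCongr (ℓ.toEquiv.trans Multiplicative.toAdd)

theorem torusMonomial_eq_one_iff (s : ℕ × ℕ) (p : Rˣ × Rˣ) :
    torusMonomial s p = 1 ↔ (s.1 : ZMod n) * (torusLog ℓ p).1 + s.2 * (torusLog ℓ p).2 = 0 := by
  rw [torusMonomial, ← Units.val_pow_eq_pow_val, ← Units.val_pow_eq_pow_val, ← Units.val_mul,
    Units.val_eq_one, ← ℓ.map_eq_one_iff, map_mul, map_pow, map_pow, ← toAdd_eq_zero]
  simp [torusLog, nsmul_eq_mul]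

end Torus

section ParallelogramCodeword

variable {R : Type*} [CommRing R]

def parallelogramCodeword (s t : ℕ × ℕ) : Rˣ × Rˣ → R :=
  (torusMonomial s - 1) * (torusMonomial t - 1)

theorem parallelogramCodeword_mem_span {S : Finset (ℕ × ℕ)} {s t : ℕ × ℕ} (h0 : (0, 0) ∈ S)
    (hs : s ∈ S) (ht : t ∈ S)
    (hst : ((s.1 + t.1) % Nat.card Rˣ, (s.2 + t.2) % Nat.card Rˣ) ∈ S) :
    (parallelogramCodeword s t : Rˣ × Rˣ → R) ∈ Submodule.span R (torusMonomial '' S) := by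
  have hmem {u : ℕ × ℕ} (hu : u ∈ S) :
      (torusMonomial u : Rˣ × Rˣ → R) ∈ Submodule.span R (torusMonomial '' S) :=
    Submodule.subset_span (Set.mem_image_of_mem _ hu)
  have hsum : (parallelogramCodeword s t : Rˣ × Rˣ → R) =
      torusMonomial ((s.1 + t.1) % Nat.card Rˣ, (s.2 + t.2) % Nat.card Rˣ) -
        torusMonomial s - torusMonomial t + torusMonomial 0 := by
    rw [torusMonomial_mod_natCard_units, ← Prod.mk_add_mk, torusMonomial_add, torusMonomial_zero,
      parallelogramCodeword]
    ring
  rw [hsum]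
  exact add_mem (sub_mem (sub_mem (hmem hst) (hmem hs)) (hmem ht)) (hmem h0)

variable [NoZeroDivisors R] {n N₁ N₂ a b c d : ℕ} {a' b' c' d' : ZMod n}

theorem parallelogramCodeword_ne_zero_iff (ℓ : Rˣ ≃* Multiplicative (ZMod n))
    (ha' : (a : ZMod n) = N₁ * a') (hb' : (b : ZMod n) = N₁ * b')
    (hc' : (c : ZMod n) = N₂ * c') (hd' : (d : ZMod n) = N₂ * d')
    (hdet : IsUnit (a' * d' - b' * c')) (p : Rˣ × Rˣ) :
    parallelogramCodeword (a, b) (c, d) p ≠ 0 ↔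
      (N₁ : ZMod n) * (prodEquivOfIsUnitDet hdet (torusLog ℓ p)).1 ≠ 0 ∧
        (N₂ : ZMod n) * (prodEquivOfIsUnitDet hdet (torusLog ℓ p)).2 ≠ 0 := by
  simp only [parallelogramCodeword, Pi.mul_apply, Pi.sub_apply, Pi.one_apply, ne_eq, mul_eq_zero,
    not_or, sub_eq_zero, torusMonomial_eq_one_iff ℓ, prodEquivOfIsUnitDet_apply, ha', hb', hc',
    hd', mul_add, mul_assoc]

theorem parallelogramCodeword_ne_zero (ℓ : Rˣ ≃* Multiplicative (ZMod n))
    (ha' : (a : ZMod n) = N₁ * a') (hb' : (b : ZMod n) = N₁ * b')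
    (hc' : (c : ZMod n) = N₂ * c') (hd' : (d : ZMod n) = N₂ * d')
    (hdet : IsUnit (a' * d' - b' * c')) (hN₁ : (N₁ : ZMod n) ≠ 0) (hN₂ : (N₂ : ZMod n) ≠ 0) :
    (parallelogramCodeword (a, b) (c, d) : Rˣ × Rˣ → R) ≠ 0 := by
  intro hzero
  refine ((parallelogramCodeword_ne_zero_iff ℓ ha' hb' hc' hd' hdet
    ((torusLog ℓ).symm ((prodEquivOfIsUnitDet hdet).symm (1, 1)))).mpr ?_) (congrFun hzero _)
  simpa using ⟨hN₁, hN₂⟩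

theorem natCard_support_parallelogramCodeword_le [NeZero n] (ℓ : Rˣ ≃* Multiplicative (ZMod n))
    (ha' : (a : ZMod n) = N₁ * a') (hb' : (b : ZMod n) = N₁ * b')
    (hc' : (c : ZMod n) = N₂ * c') (hd' : (d : ZMod n) = N₂ * d')
    (hdet : IsUnit (a' * d' - b' * c')) (hN₁ : N₁ ∣ n) (hN₂ : N₂ ∣ n) :
    Nat.card {p : Rˣ × Rˣ // parallelogramCodeword (a, b) (c, d) p ≠ 0} ≤ (n - N₁) * (n - N₂) := by
  rw [Nat.card_congr (((torusLog ℓ).trans (prodEquivOfIsUnitDet hdet)).subtypeEquiv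
    (q := fun st => (N₁ : ZMod n) * st.1 ≠ 0 ∧ (N₂ : ZMod n) * st.2 ≠ 0)
    (parallelogramCodeword_ne_zero_iff ℓ ha' hb' hc' hd' hdet))]
  exact ZMod.natCard_mul_ne_zero_and_mul_ne_zero_le hN₁ hN₂

end ParallelogramCodeword

theorem toric_code_parallelogram_bound_general (q N₁ N₂ : ℕ)
    (hN₁dvd : N₁ ∣ q - 1) (hN₂dvd : N₂ ∣ q - 1)
    (F : Type) [Field F] [Fintype F] (hF : Fintype.card F = q)
    (S : Finset (ℕ × ℕ)) (hS : ∀ s ∈ S, s.1 ≤ q - 2 ∧ s.2 ≤ q - 2)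
    (a b c d : ℕ)
    (h0 : ((0, 0) : ℕ × ℕ) ∈ S) (hab : (a, b) ∈ S) (hcd : (c, d) ∈ S)
    (habcd : ((a + c) % (q - 1), (b + d) % (q - 1)) ∈ S)
    (hdistinct : ([((0, 0) : ℕ × ℕ), (a, b), (c, d),
        ((a + c) % (q - 1), (b + d) % (q - 1))] : List (ℕ × ℕ)).Pairwise (· ≠ ·))
    (a' b' c' d' : ZMod (q - 1))
    (ha' : (a : ZMod (q - 1)) = (N₁ : ZMod (q - 1)) * a')
    (hb' : (b : ZMod (q - 1)) = (N₁ : ZMod (q - 1)) * b')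
    (hc' : (c : ZMod (q - 1)) = (N₂ : ZMod (q - 1)) * c')
    (hd' : (d : ZMod (q - 1)) = (N₂ : ZMod (q - 1)) * d')
    (hgen : AddSubgroup.closure
      ({((a', b') : ZMod (q - 1) × ZMod (q - 1)), ((c', d') : ZMod (q - 1) × ZMod (q - 1))} :
        Set (ZMod (q - 1) × ZMod (q - 1))) = ⊤) :
    ∃ w : Fˣ × Fˣ → F,
      (∃ co : ℕ × ℕ → F,
        ∀ p : Fˣ × Fˣ, w p = ∑ s ∈ S, co s * (p.1 : F) ^ s.1 * (p.2 : F) ^ s.2) ∧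
      w ≠ 0 ∧
      (Nat.card {p : Fˣ × Fˣ // w p ≠ 0} : ℤ) ≤
        ((q : ℤ) - 1) ^ 2 - (N₁ + N₂) * ((q : ℤ) - 1) + N₁ * N₂ := by
  have hcard : Nat.card Fˣ = q - 1 := by rw [Nat.card_units, Nat.card_eq_fintype_card, hF]
  have hq : q - 1 ≠ 0 := hcard ▸ Nat.card_ne_zero.mpr ⟨inferInstance, inferInstance⟩
  have : NeZero (q - 1) := ⟨hq⟩
  let ℓ : Fˣ ≃* Multiplicative (ZMod (q - 1)) := mulEquivOfCyclicCardEq (by simp [hcard])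
  have hdet := isUnit_det_of_closure_pair_eq_top hgen
  have h0_ne := (List.pairwise_cons.mp hdistinct).1
  have hlt {i : ℕ} (hi : i ≤ q - 2) : i < q - 1 := by omega
  have hN₁ := ZMod.natCast_ne_zero_of_natCast_pair_eq_mul (hlt (hS _ hab).1) (hlt (hS _ hab).2)
    (h0_ne (a, b) (by simp)) ha' hb'
  have hN₂ := ZMod.natCast_ne_zero_of_natCast_pair_eq_mul (hlt (hS _ hcd).1) (hlt (hS _ hcd).2)
    (h0_ne (c, d) (by simp)) hc' hd'
  refine ⟨parallelogramCodeword (a, b) (c, d),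
    exists_coeffs_of_mem_span_torusMonomial (parallelogramCodeword_mem_span h0 hab hcd
      (by rwa [hcard])),
    parallelogramCodeword_ne_zero ℓ ha' hb' hc' hd' hdet hN₁ hN₂, ?_⟩
  have hN₁le := Nat.le_of_dvd (Nat.pos_of_ne_zero hq) hN₁dvd
  have hN₂le := Nat.le_of_dvd (Nat.pos_of_ne_zero hq) hN₂dvd
  calc (Nat.card {p : Fˣ × Fˣ // parallelogramCodeword (a, b) (c, d) p ≠ 0} : ℤ)
      ≤ ((q - 1 - N₁) * (q - 1 - N₂) : ℕ) := by
        exact_mod_cast natCard_support_parallelogramCodeword_le ℓ ha' hb' hc' hd' hdet hN₁dvd hN₂dvd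
    _ = ((q : ℤ) - 1) ^ 2 - (N₁ + N₂) * ((q : ℤ) - 1) + N₁ * N₂ := by
        push_cast [Nat.cast_sub hN₁le, Nat.cast_sub hN₂le, Nat.cast_sub (by omega : 1 ≤ q)]
        ring

/-- Let `q` be a prime power, `F` a field with `q` elements, and `S ⊆ {0,…,q-2}²`
containing the four (distinct) vertices `(0,0)`, `(a,b)`, `(c,d)`, `(a+c, b+d)` of a
"parallelogram" (sums mod `q - 1`).  Suppose `(a,b) ≡ N₁·(a',b')` and
`(c,d) ≡ N₂·(c',d') (mod q - 1)` with `N₁, N₂` positive divisors of `q - 1`,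
`(a',b'), (c',d') ∈ B`, and `(a',b')`, `(c',d')` generating `(ℤ/(q-1)ℤ)²`.  Then the
minimum distance of `C_S(F)` is at most `(q-1)² - (N₁+N₂)(q-1) + N₁N₂`. -/
theorem toric_code_parallelogram_bound (q N₁ N₂ : ℕ) (hq : IsPrimePow q)
    (hN₁ : 0 < N₁) (hN₁dvd : N₁ ∣ q - 1) (hN₂ : 0 < N₂) (hN₂dvd : N₂ ∣ q - 1)
    (F : Type) [Field F] [Fintype F] (hF : Fintype.card F = q)
    (S : Finset (ℕ × ℕ)) (hS : ∀ s ∈ S, s.1 ≤ q - 2 ∧ s.2 ≤ q - 2)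
    (a b c d : ℕ)
    (h0 : ((0, 0) : ℕ × ℕ) ∈ S) (hab : (a, b) ∈ S) (hcd : (c, d) ∈ S)
    (habcd : ((a + c) % (q - 1), (b + d) % (q - 1)) ∈ S)
    (hdistinct : ([((0, 0) : ℕ × ℕ), (a, b), (c, d),
        ((a + c) % (q - 1), (b + d) % (q - 1))] : List (ℕ × ℕ)).Pairwise (· ≠ ·))
    (a' b' c' d' : ZMod (q - 1))
    (ha' : (a : ZMod (q - 1)) = (N₁ : ZMod (q - 1)) * a')
    (hb' : (b : ZMod (q - 1)) = (N₁ : ZMod (q - 1)) * b')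
    (hc' : (c : ZMod (q - 1)) = (N₂ : ZMod (q - 1)) * c')
    (hd' : (d : ZMod (q - 1)) = (N₂ : ZMod (q - 1)) * d')
    (hab' : ((a', b') : ZMod (q - 1) × ZMod (q - 1)) ∈ Bset (ZMod (q - 1)))
    (hcd' : ((c', d') : ZMod (q - 1) × ZMod (q - 1)) ∈ Bset (ZMod (q - 1)))
    (hgen : AddSubgroup.closure
      ({((a', b') : ZMod (q - 1) × ZMod (q - 1)), ((c', d') : ZMod (q - 1) × ZMod (q - 1))} :
        Set (ZMod (q - 1) × ZMod (q - 1))) = ⊤) :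
    ∃ w : Fˣ × Fˣ → F,
      (∃ co : ℕ × ℕ → F,
        ∀ p : Fˣ × Fˣ, w p = ∑ s ∈ S, co s * (p.1 : F) ^ s.1 * (p.2 : F) ^ s.2) ∧
      w ≠ 0 ∧
      (Nat.card {p : Fˣ × Fˣ // w p ≠ 0} : ℤ) ≤
        ((q : ℤ) - 1) ^ 2 - (N₁ + N₂) * ((q : ℤ) - 1) + N₁ * N₂ :=
  toric_code_parallelogram_bound_general q N₁ N₂ hN₁dvd hN₂dvd F hF S hS a b c d h0 hab hcd habcd
    hdistinct a' b' c' d' ha' hb' hc' hd' hgen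
end

section
/- Let R = ℤ/6ℤ. The three pairs (1,0), (1,3), (4,3) all belong to B, the three lines R·(1,0), R·(1,3), R·(4,3) through the origin are pairwise distinct as subsets of R², and each of these three lines contains both (0,0) and (2,0). In particular, the number of distinct lines through the neighboring points (0,0) and (2,0) is at least 3, which is strictly greater than 6/o((2,0)) = 6/3 = 2, where o((2,0)) denotes the order of (2,0) in the additive group R². (Thus the line-count formula r/o for prime powers r fails when r = 6.) -/
/-- The line `R·(u,v)` through the origin, for `R = ℤ/6ℤ`. -/
def line6 (u v : ZMod 6) : Set (ZMod 6 × ZMod 6) :=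
  {p | ∃ ℓ : ZMod 6, p = (ℓ * u, ℓ * v)}

/-!
A pair is a row of an invertible `2 × 2` matrix exactly when its entries generate the unit ideal.
In `ℤ/6ℤ` the zero divisor `2` satisfies `2 • (u, 3) = (2u, 0)`, so `(2, 0)` lies on each of
`R·(1,0)`, `R·(1,3)`, `R·(4,3)`, while no direction vector is a multiple of another, so these
three lines through the neighbours `(0,0)` and `(2,0)` are distinct.
-/

theorem mem_Bset_iff_isCoprime {R : Type*} [CommRing R] {u v : R} :
    (u, v) ∈ Bset R ↔ IsCoprime u v := by
  constructor
  · rintro ⟨M, hdet, i, hu, hv⟩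
    obtain ⟨w, hw⟩ := hdet.exists_left_inv
    rw [Matrix.det_fin_two] at hw
    fin_cases i <;> simp only [Fin.zero_eta, Fin.mk_one] at hu hv <;> subst hu hv
    · exact ⟨w * M 1 1, -(w * M 1 0), by linear_combination hw⟩
    · exact ⟨-(w * M 0 1), w * M 0 0, by linear_combination hw⟩
  · rintro ⟨a, b, hab⟩
    refine ⟨!![u, v; -b, a], ?_, 0, rfl, rfl⟩
    rw [Matrix.det_fin_two_of, show u * a - v * -b = 1 by linear_combination hab]
    exact isUnit_one

theorem mem_line6_iff {p : ZMod 6 × ZMod 6} {u v : ZMod 6} :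
    p ∈ line6 u v ↔ ∃ ℓ : ZMod 6, p = (ℓ * u, ℓ * v) :=
  Iff.rfl

theorem isLine_line6 {u v : ZMod 6} (h : (u, v) ∈ Bset (ZMod 6)) : IsLine (line6 u v) :=
  ⟨0, 0, (u, v), h, by simp [line6]⟩

theorem zero_mem_line6 (u v : ZMod 6) : ((0, 0) : ZMod 6 × ZMod 6) ∈ line6 u v :=
  ⟨0, by simp⟩

theorem line6_ne_of_notMem {u v u' v' : ZMod 6} (h : (u, v) ∉ line6 u' v') :
    line6 u v ≠ line6 u' v' :=
  fun heq => h (heq ▸ ⟨1, by simp⟩)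

/-- In the affine plane over `ℤ/6ℤ`: the pairs `(1,0)`, `(1,3)`, `(4,3)` all belong to
`B`; the lines `R·(1,0)`, `R·(1,3)`, `R·(4,3)` are pairwise distinct and each contains
both `(0,0)` and `(2,0)`, which are neighbors. In particular there are at least `3`
lines through `(0,0)` and `(2,0)`, strictly more than `6 / o((2,0)) = 2`. -/
theorem Zmod6_counterexample :
    ((1, 0) : ZMod 6 × ZMod 6) ∈ Bset (ZMod 6) ∧
    ((1, 3) : ZMod 6 × ZMod 6) ∈ Bset (ZMod 6) ∧
    ((4, 3) : ZMod 6 × ZMod 6) ∈ Bset (ZMod 6) ∧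
    (line6 1 0 ≠ line6 1 3 ∧ line6 1 0 ≠ line6 4 3 ∧ line6 1 3 ≠ line6 4 3) ∧
    (((0, 0) : ZMod 6 × ZMod 6) ∈ line6 1 0 ∧ ((2, 0) : ZMod 6 × ZMod 6) ∈ line6 1 0) ∧
    (((0, 0) : ZMod 6 × ZMod 6) ∈ line6 1 3 ∧ ((2, 0) : ZMod 6 × ZMod 6) ∈ line6 1 3) ∧
    (((0, 0) : ZMod 6 × ZMod 6) ∈ line6 4 3 ∧ ((2, 0) : ZMod 6 × ZMod 6) ∈ line6 4 3) ∧
    ((2, 0) : ZMod 6 × ZMod 6) ∉ Bset (ZMod 6) ∧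
    addOrderOf ((2, 0) : ZMod 6 × ZMod 6) = 3 ∧
    3 ≤ Set.ncard {L : Set (ZMod 6 × ZMod 6) |
        IsLine L ∧ ((0, 0) : ZMod 6 × ZMod 6) ∈ L ∧ ((2, 0) : ZMod 6 × ZMod 6) ∈ L} ∧
    6 / addOrderOf ((2, 0) : ZMod 6 × ZMod 6) <
      Set.ncard {L : Set (ZMod 6 × ZMod 6) |
        IsLine L ∧ ((0, 0) : ZMod 6 × ZMod 6) ∈ L ∧ ((2, 0) : ZMod 6 × ZMod 6) ∈ L} := by
  have hB10 : ((1, 0) : ZMod 6 × ZMod 6) ∈ Bset (ZMod 6) :=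
    mem_Bset_iff_isCoprime.2 isCoprime_one_left
  have hB13 : ((1, 3) : ZMod 6 × ZMod 6) ∈ Bset (ZMod 6) :=
    mem_Bset_iff_isCoprime.2 isCoprime_one_left
  have hB43 : ((4, 3) : ZMod 6 × ZMod 6) ∈ Bset (ZMod 6) :=
    mem_Bset_iff_isCoprime.2 ⟨1, 1, by decide⟩
  have hB20 : ((2, 0) : ZMod 6 × ZMod 6) ∉ Bset (ZMod 6) := by
    rw [mem_Bset_iff_isCoprime, isCoprime_zero_right]
    decide
  have hne₁ : line6 1 0 ≠ line6 1 3 := line6_ne_of_notMem (by rw [mem_line6_iff]; decide)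
  have hne₂ : line6 1 0 ≠ line6 4 3 := line6_ne_of_notMem (by rw [mem_line6_iff]; decide)
  have hne₃ : line6 1 3 ≠ line6 4 3 := line6_ne_of_notMem (by rw [mem_line6_iff]; decide)
  have h₁ : ((2, 0) : ZMod 6 × ZMod 6) ∈ line6 1 0 := ⟨2, by decide⟩
  have h₂ : ((2, 0) : ZMod 6 × ZMod 6) ∈ line6 1 3 := ⟨2, by decide⟩
  have h₃ : ((2, 0) : ZMod 6 × ZMod 6) ∈ line6 4 3 := ⟨2, by decide⟩
  have hord : addOrderOf ((2, 0) : ZMod 6 × ZMod 6) = 3 :=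
    addOrderOf_eq_prime (by decide) (by decide)
  have hcard : 2 < Set.ncard {L : Set (ZMod 6 × ZMod 6) |
      IsLine L ∧ ((0, 0) : ZMod 6 × ZMod 6) ∈ L ∧ ((2, 0) : ZMod 6 × ZMod 6) ∈ L} :=
    (Set.two_lt_ncard_iff (Set.toFinite _)).2 ⟨_, _, _,
      ⟨isLine_line6 hB10, zero_mem_line6 1 0, h₁⟩, ⟨isLine_line6 hB13, zero_mem_line6 1 3, h₂⟩,
      ⟨isLine_line6 hB43, zero_mem_line6 4 3, h₃⟩, hne₁, hne₂, hne₃⟩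
  refine ⟨hB10, hB13, hB43, ⟨hne₁, hne₂, hne₃⟩, ⟨zero_mem_line6 1 0, h₁⟩,
    ⟨zero_mem_line6 1 3, h₂⟩, ⟨zero_mem_line6 4 3, h₃⟩, hB20, hord, hcard, ?_⟩
  rw [hord]
  omega
end

section
/- Let S ⊆ {0, 1, …, 7}² be any set of exponent vectors containing the three points (0,0), (3,1), and (1,3). Then the minimum distance of the generalized toric code C_S(𝔽₉) satisfies d(C_S(𝔽₉)) ≤ 64 − 3·8 = 40; concretely, choosing pairwise distinct nonzero β₁, β₂, β₃ ∈ 𝔽₉ with β₁ + β₂ + β₃ = 0, the nonzero linear combination x y³ + (β₁β₂ + β₁β₃ + β₂β₃) x³ y + β₁β₂β₃ of the monomials corresponding to S vanishes at exactly 24 points of (𝔽₉^×)². -/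
/-!
Put `u = x³y`. Since `x⁹ = x` on `𝔽₉` and `β₁ + β₂ + β₃ = 0`, the polynomial agrees on the torus
with `(u + β₁)(u + β₂)(u + β₃)`, so it vanishes exactly where `u ∈ {-β₁, -β₂, -β₃}`. The fibre of
`(x, y) ↦ x³y` over any unit `c` is the graph of `x ↦ c x⁻³`, with `8` points, so there are
`3 · 8 = 24` zeros and `64 - 24 = 40` non-zeros.
-/

def powMulPreimageEquiv {G : Type*} [Group G] (n : ℕ) (T : Set G) :
    {p : G × G // p.1 ^ n * p.2 ∈ T} ≃ G × T where
  toFun p := (p.1.1, ⟨p.1.1 ^ n * p.1.2, p.2⟩)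
  invFun q := ⟨(q.1, (q.1 ^ n)⁻¹ * q.2), by simp⟩
  left_inv p := by simp
  right_inv q := by simp

theorem Nat.card_subtype_pow_mul_mem {G : Type*} [Group G] (n : ℕ) (T : Set G) :
    Nat.card {p : G × G // p.1 ^ n * p.2 ∈ T} = Nat.card G * T.ncard := by
  rw [Nat.card_congr (powMulPreimageEquiv n T), Nat.card_prod, Nat.card_coe_set_eq]

theorem Units.add_mul_add_mul_add_eq_zero_iff {F : Type*} [Field F] (u b₁ b₂ b₃ : Fˣ) :
    ((u : F) + b₁) * ((u : F) + b₂) * ((u : F) + b₃) = 0 ↔ u ∈ ({-b₁, -b₂, -b₃} : Set Fˣ) := by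
  simp only [mul_eq_zero, add_eq_zero_iff_eq_neg, ← Units.val_neg, Units.val_inj, or_assoc]
  rfl

theorem mul_pow_three_add_eq_prod {R : Type*} [CommRing R] {x y β₁ β₂ β₃ : R}
    (hx : x ^ 9 = x) (hsum : β₁ + β₂ + β₃ = 0) :
    x * y ^ 3 + (β₁ * β₂ + β₁ * β₃ + β₂ * β₃) * x ^ 3 * y + β₁ * β₂ * β₃ =
      (x ^ 3 * y + β₁) * (x ^ 3 * y + β₂) * (x ^ 3 * y + β₃) := by
  linear_combination (-(x ^ 3 * y) ^ 2) * hsum - y ^ 3 * hx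

theorem sum_pi_single_mul_pow_mul_pow {R : Type*} [CommSemiring R] {S : Finset (ℕ × ℕ)}
    {i : ℕ × ℕ} (hi : i ∈ S) (a x y : R) :
    ∑ s ∈ S, (Pi.single i a : ℕ × ℕ → R) s * x ^ s.1 * y ^ s.2 = a * x ^ i.1 * y ^ i.2 := by
  rw [Finset.sum_eq_single_of_mem i hi (fun s _ hs => by simp [hs])]
  simp

theorem F9_collinear_min_dist_bound_general (F : Type) [Field F] [Fintype F]
    (hF : Fintype.card F = 9)
    (S : Finset (ℕ × ℕ))
    (h1 : ((0, 0) : ℕ × ℕ) ∈ S) (h2 : ((3, 1) : ℕ × ℕ) ∈ S) (h3 : ((1, 3) : ℕ × ℕ) ∈ S)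
    (β₁ β₂ β₃ : F) (hβ1 : β₁ ≠ 0) (hβ2 : β₂ ≠ 0) (hβ3 : β₃ ≠ 0)
    (h12 : β₁ ≠ β₂) (h13 : β₁ ≠ β₃) (h23 : β₂ ≠ β₃) (hsum : β₁ + β₂ + β₃ = 0) :
    ∃ w : Fˣ × Fˣ → F,
      (∀ p : Fˣ × Fˣ, w p =
        (p.1 : F) * (p.2 : F) ^ 3 +
          (β₁ * β₂ + β₁ * β₃ + β₂ * β₃) * (p.1 : F) ^ 3 * (p.2 : F) +
          β₁ * β₂ * β₃) ∧
      (∃ c : ℕ × ℕ → F,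
        ∀ p : Fˣ × Fˣ, w p = ∑ s ∈ S, c s * (p.1 : F) ^ s.1 * (p.2 : F) ^ s.2) ∧
      w ≠ 0 ∧
      Nat.card {p : Fˣ × Fˣ // w p = 0} = 24 ∧
      Nat.card {p : Fˣ × Fˣ // w p ≠ 0} ≤ 40 := by
  let w : Fˣ × Fˣ → F := fun p =>
    (p.1 : F) * (p.2 : F) ^ 3 + (β₁ * β₂ + β₁ * β₃ + β₂ * β₃) * (p.1 : F) ^ 3 * (p.2 : F) +
      β₁ * β₂ * β₃
  have hcard : Nat.card Fˣ = 8 := by rw [Nat.card_units, Nat.card_eq_fintype_card, hF]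
  let b₁ := Units.mk0 β₁ hβ1
  let b₂ := Units.mk0 β₂ hβ2
  let b₃ := Units.mk0 β₃ hβ3
  have hzero_iff (p : Fˣ × Fˣ) : w p = 0 ↔ p.1 ^ 3 * p.2 ∈ ({-b₁, -b₂, -b₃} : Set Fˣ) := by
    have hx : (p.1 : F) ^ 9 = p.1 := hF ▸ FiniteField.pow_card _
    rw [← Units.add_mul_add_mul_add_eq_zero_iff, Units.val_mul, Units.val_pow_eq_pow_val,
      Units.val_mk0, Units.val_mk0, Units.val_mk0, ← mul_pow_three_add_eq_prod hx hsum]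
  have hzero : Nat.card {p : Fˣ × Fˣ // w p = 0} = 24 := by
    have hb : ({-b₁, -b₂, -b₃} : Set Fˣ).ncard = 3 := by
      rw [Set.ncard_eq_three]
      refine ⟨_, _, _, ?_, ?_, ?_, rfl⟩ <;> simpa [b₁, b₂, b₃, Units.ext_iff]
    simp_rw [hzero_iff, Nat.card_subtype_pow_mul_mem, hcard, hb]
  have hnonzero : Nat.card {p : Fˣ × Fˣ // w p ≠ 0} = 40 := by
    classical
    rw [Nat.card_eq_fintype_card, Fintype.card_subtype_compl]
    simp only [← Nat.card_eq_fintype_card]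
    rw [hzero, Nat.card_prod, hcard]
  refine ⟨w, fun _ => rfl, ⟨Pi.single (1, 3) 1 + Pi.single (3, 1) (β₁ * β₂ + β₁ * β₃ + β₂ * β₃) +
    Pi.single (0, 0) (β₁ * β₂ * β₃), fun p => ?_⟩, fun h => ?_, hzero, hnonzero.le⟩
  · simp only [Pi.add_apply, add_mul, Finset.sum_add_distrib, sum_pi_single_mul_pow_mul_pow h1,
      sum_pi_single_mul_pow_mul_pow h2, sum_pi_single_mul_pow_mul_pow h3, w]
    ring
  · simp [h] at hnonzero

/-- Let `F` be the field with `9` elements and `S ⊆ {0,…,7}²` a set of exponent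
vectors containing `(0,0)`, `(3,1)`, `(1,3)`.  For any pairwise distinct nonzero
`β₁, β₂, β₃ ∈ F` with `β₁ + β₂ + β₃ = 0`, the nonzero linear combination
`x y³ + (β₁β₂ + β₁β₃ + β₂β₃) x³ y + β₁β₂β₃` of monomials from `S` vanishes at exactly
`24` points of the torus `(Fˣ)²`; hence `d(C_S(F₉)) ≤ 64 - 3·8 = 40`. -/
theorem F9_collinear_min_dist_bound (F : Type) [Field F] [Fintype F]
    (hF : Fintype.card F = 9)
    (S : Finset (ℕ × ℕ)) (hS : ∀ s ∈ S, s.1 ≤ 7 ∧ s.2 ≤ 7)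
    (h1 : ((0, 0) : ℕ × ℕ) ∈ S) (h2 : ((3, 1) : ℕ × ℕ) ∈ S) (h3 : ((1, 3) : ℕ × ℕ) ∈ S)
    (β₁ β₂ β₃ : F) (hβ1 : β₁ ≠ 0) (hβ2 : β₂ ≠ 0) (hβ3 : β₃ ≠ 0)
    (h12 : β₁ ≠ β₂) (h13 : β₁ ≠ β₃) (h23 : β₂ ≠ β₃) (hsum : β₁ + β₂ + β₃ = 0) :
    ∃ w : Fˣ × Fˣ → F,
      (∀ p : Fˣ × Fˣ, w p =
        (p.1 : F) * (p.2 : F) ^ 3 +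
          (β₁ * β₂ + β₁ * β₃ + β₂ * β₃) * (p.1 : F) ^ 3 * (p.2 : F) +
          β₁ * β₂ * β₃) ∧
      (∃ c : ℕ × ℕ → F,
        ∀ p : Fˣ × Fˣ, w p = ∑ s ∈ S, c s * (p.1 : F) ^ s.1 * (p.2 : F) ^ s.2) ∧
      w ≠ 0 ∧
      Nat.card {p : Fˣ × Fˣ // w p = 0} = 24 ∧
      Nat.card {p : Fˣ × Fˣ // w p ≠ 0} ≤ 40 :=
  F9_collinear_min_dist_bound_general F hF S h1 h2 h3 β₁ β₂ β₃ hβ1 hβ2 hβ3 h12 h13 h23 hsum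
end

section
/- Let α ∈ 𝔽₉ be a root of u² + u + 2 = 0 and let S₀ = {(0,0), (3,0), (1,4), (2,4)} ⊆ {0,…,7}². The function (x,y) ↦ α⁷ + α²x³ + α⁶xy⁴ + α³x²y⁴ vanishes at exactly 24 points of (𝔽₉^×)² (the curves y² + x = 0, α⁴y² + x = 0, αy⁴ + x = 0 have no common 𝔽₉-rational points in the torus pairwise). Consequently, the corresponding codeword of the generalized toric code C_{S₀}(𝔽₉) has Hamming weight exactly 40, and d(C_{S₀}(𝔽₉)) ≤ 40. -/
/-!
In characteristic `3` the relation `α² + α + 2 = 0` gives `α⁴ = -1`, and every `y ∈ F₉ˣ` has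
`y⁸ = 1`; together they factor the polynomial on the torus as `α² (x - y²)(x + y²)(x + α y⁴)`.
For each `y` the three roots are distinct units: `y² ≠ -y²` as `2 ≠ 0`, and `±y² = -α y⁴` would
force `α² = y⁴`, hence `-1 = α⁴ = y⁸ = 1`. So there are `3 · 8 = 24` zeros and `64 - 24 = 40`
nonzero values.
-/

open Finset

theorem card_units_filter_three_roots {K : Type*} [Field K] [Fintype K] [DecidableEq K]
    {a b c : Kˣ} (hab : a ≠ b) (hac : a ≠ c) (hbc : b ≠ c) :
    #{x : Kˣ | ((x : K) - a) * ((x : K) - b) * ((x : K) - c) = 0} = 3 := by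
  rw [card_eq_three]
  refine ⟨a, b, c, hab, hac, hbc, ?_⟩
  ext x
  simp [mul_eq_zero, sub_eq_zero, Units.val_inj, or_assoc]

theorem Fintype.card_subtype_prod_eq_sum {A B : Type*} [Fintype A] [Fintype B] (P : A × B → Prop)
    [DecidablePred P] : Fintype.card {p // P p} = ∑ b, #{a | P (a, b)} := by
  simp only [Fintype.card_subtype, card_filter, Fintype.sum_prod_type_right]

theorem trapezoid_poly_eq_mul {R : Type*} [CommRing R] {α x y : R} (hα : α ^ 4 = -1)
    (hy : y ^ 8 = 1) :
    α ^ 7 + α ^ 2 * x ^ 3 + α ^ 6 * x * y ^ 4 + α ^ 3 * x ^ 2 * y ^ 4 =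
      α ^ 2 * ((x - y ^ 2) * (x - -y ^ 2) * (x - -(α * y ^ 4))) := by
  linear_combination (α ^ 2 * x * y ^ 4 + α ^ 3) * hα + α ^ 3 * hy

section

variable {F : Type*} [Field F]

def trapezoidCodeword (α : F) (p : Fˣ × Fˣ) : F :=
  α ^ 7 + α ^ 2 * (p.1 : F) ^ 3 + α ^ 6 * (p.1 : F) * (p.2 : F) ^ 4 +
    α ^ 3 * (p.1 : F) ^ 2 * (p.2 : F) ^ 4

variable [Fintype F] [DecidableEq F] {α : F}

theorem card_filter_trapezoidCodeword_eq_zero (h2 : (2 : F) ≠ 0) (hα : α ^ 4 = -1) {y : Fˣ}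
    (hy : y ^ 8 = 1) : #{x : Fˣ | trapezoidCodeword α (x, y) = 0} = 3 := by
  have hα0 : α ≠ 0 := by rintro rfl; simp at hα
  have hy' : (y : F) ^ 8 = 1 := by simpa using congrArg Units.val hy
  set a := Units.mk0 α hα0
  have hne : ∀ u : Fˣ, u ^ 2 = y ^ 4 → u ≠ -(a * y ^ 4) := by
    rintro u hu rfl
    have hαy : α ^ 2 = (y : F) ^ 4 := by
      simpa [a, mul_pow, ← pow_mul, hy'] using congrArg Units.val hu
    have h1 : (α ^ 2) ^ 2 = ((y : F) ^ 4) ^ 2 := by rw [hαy]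
    rw [← pow_mul, ← pow_mul, hα, hy'] at h1
    exact h2 (by linear_combination -h1)
  have hy_ne_neg : y ^ 2 ≠ -y ^ 2 := by
    intro h
    apply h2
    have h' : (y : F) ^ 2 = -y ^ 2 := by simpa using congrArg Units.val h
    linear_combination y ^ 6 * h' - 2 * hy'
  rw [← card_units_filter_three_roots hy_ne_neg (hne _ (by rw [← pow_mul]))
    (hne _ (by rw [neg_sq, ← pow_mul]))]
  congr 1
  ext x
  simp [trapezoidCodeword, trapezoid_poly_eq_mul hα hy', hα0, a]

theorem card_trapezoidCodeword_eq_zero (h2 : (2 : F) ≠ 0) (hα : α ^ 4 = -1)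
    (hF : ∀ y : Fˣ, y ^ 8 = 1) :
    Fintype.card {p : Fˣ × Fˣ // trapezoidCodeword α p = 0} = 3 * Fintype.card Fˣ := by
  simp [Fintype.card_subtype_prod_eq_sum, card_filter_trapezoidCodeword_eq_zero h2 hα (hF _),
    mul_comm]

end

/-- Let `F` be the field with `9` elements, `α` a root of `u² + u + 2 = 0`, and
`S₀ = {(0,0), (3,0), (1,4), (2,4)}`.  The function
`(x,y) ↦ α⁷ + α²x³ + α⁶xy⁴ + α³x²y⁴` vanishes at exactly `24` points of the torus
`(Fˣ)²`, so the corresponding codeword of `C_{S₀}(F₉)` is nonzero with Hamming weight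
exactly `40`; in particular `d(C_{S₀}(F₉)) ≤ 40`. -/
theorem F9_trapezoid_weight (F : Type) [Field F] [Fintype F]
    (hF : Fintype.card F = 9) (α : F) (hα : α ^ 2 + α + 2 = 0) :
    ∃ w : Fˣ × Fˣ → F,
      (∀ p : Fˣ × Fˣ, w p =
        α ^ 7 + α ^ 2 * (p.1 : F) ^ 3 + α ^ 6 * (p.1 : F) * (p.2 : F) ^ 4 +
          α ^ 3 * (p.1 : F) ^ 2 * (p.2 : F) ^ 4) ∧
      (∃ c : ℕ × ℕ → F,
        ∀ p : Fˣ × Fˣ, w p =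
          ∑ s ∈ ({(0, 0), (3, 0), (1, 4), (2, 4)} : Finset (ℕ × ℕ)),
            c s * (p.1 : F) ^ s.1 * (p.2 : F) ^ s.2) ∧
      w ≠ 0 ∧
      Nat.card {p : Fˣ × Fˣ // w p = 0} = 24 ∧
      Nat.card {p : Fˣ × Fˣ // w p ≠ 0} = 40 := by
  classical
  have h3 : (3 : F) = 0 := by
    have h9 := FiniteField.cast_card_eq_zero F
    rw [hF] at h9
    exact pow_eq_zero_iff two_ne_zero |>.mp (by linear_combination h9)
  have h2 : (2 : F) ≠ 0 := fun h ↦ one_ne_zero (by linear_combination h3 - h)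
  have hα4 : α ^ 4 = -1 := by linear_combination (α ^ 2 - α - 1) * hα + (α + 1) * h3
  have hunits : Fintype.card Fˣ = 8 := by rw [Fintype.card_units, hF]
  have hy : ∀ y : Fˣ, y ^ 8 = 1 := fun y ↦ hunits ▸ pow_card_eq_one
  have hzeros : Fintype.card {p // trapezoidCodeword α p = 0} = 24 := by
    rw [card_trapezoidCodeword_eq_zero h2 hα4 hy, hunits]
  have h40 : Nat.card {p // trapezoidCodeword α p ≠ 0} = 40 := by
    rw [Nat.card_eq_fintype_card, Fintype.card_subtype_compl, hzeros]
    simp [hunits]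
  refine ⟨trapezoidCodeword α, fun _ ↦ rfl,
    ⟨fun | (0, 0) => α ^ 7 | (3, 0) => α ^ 2 | (1, 4) => α ^ 6 | _ => α ^ 3, fun p ↦ ?_⟩,
    ?_, Nat.card_eq_fintype_card.trans hzeros, h40⟩
  · rw [sum_insert (by decide), sum_insert (by decide), sum_insert (by decide), sum_singleton]
    simp only [trapezoidCodeword]
    ring
  · intro h
    simp [h] at h40
end
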